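/- In an SP-structure satisfying Symmetry, Non-negativity, Boundedness, and O-Projection, for every subspace X the set X^⊥ = {x ∈ Ω : p(x,y) = 0 for all y ∈ X} is a subspace, and (X^⊥)^⊥ = X. -/

import Mathlib

variable {Ω : Type*}

def IsOrtho (p : Ω → Ω → ℝ) (A : Set Ω) : Prop :=
  ∀ x ∈ A, ∀ y ∈ A, x ≠ y → p x y = 0

noncomputable def pSet (p : Ω → Ω → ℝ) (x : Ω) (A : Set Ω) : ℝ :=
  ∑' a : A, p x a

def Symm (p : Ω → Ω → ℝ) : Prop := ∀ x y, p x y = p y x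

def Nonneg (p : Ω → Ω → ℝ) : Prop := ∀ x y, 0 ≤ p x y

def Bounded (p : Ω → Ω → ℝ) : Prop :=
  ∀ (x : Ω) (A : Set Ω), IsOrtho p A →
    Summable (fun a : A => p x a) ∧ pSet p x A ≤ 1

def OProj (p : Ω → Ω → ℝ) : Prop :=
  ∀ (x : Ω) (A : Set Ω), IsOrtho p A → pSet p x A < 1 →
    ∃ y, pSet p y A = 0 ∧ pSet p x A + p x y = 1

def Factor (p : Ω → Ω → ℝ) : Prop :=
  ∀ (x y z : Ω) (A : Set Ω), IsOrtho p A → pSet p y A = 1 → pSet p z A = 1 →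
    p x y = pSet p x A → p x z = p x y * p y z

def Subgen (p : Ω → Ω → ℝ) (A : Set Ω) : Set Ω := {x | pSet p x A = 1}

def IsSubspace (p : Ω → Ω → ℝ) (X : Set Ω) : Prop :=
  ∃ A, IsOrtho p A ∧ X = Subgen p A

def Standard (p : Ω → Ω → ℝ) : Prop := ∀ x y, p x y = 1 → x = y

def Perp (p : Ω → Ω → ℝ) (X : Set Ω) : Set Ω := {x | ∀ y ∈ X, p x y = 0}

/-!
Extend a basis `A` of `X` to a maximal ortho-set `C` by Zorn's lemma. O-Projection forces every
point to have total weight `1` on `C`, since a point of weight `< 1` would yield a new orthogonal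
element. A point is orthogonal to the whole span of `A` exactly when its weight on `A` vanishes:
adjoining such a point `x` to `A` keeps it ortho, and Boundedness then bounds `p y x` by
`1 - p(y, A) = 0` for every `y` of weight `1` on `A`. Hence `X^⊥` is spanned by `C \ A`, and the
same argument for `C \ A` gives `X^⊥⊥ = X`.
-/

variable {p : Ω → Ω → ℝ} {A B C : Set Ω} {x : Ω}

lemma IsOrtho.mono (hB : IsOrtho p B) (hAB : A ⊆ B) : IsOrtho p A :=
  Set.Pairwise.mono hAB hB

lemma isOrtho_singleton (p : Ω → Ω → ℝ) (x : Ω) : IsOrtho p {x} :=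
  Set.pairwise_singleton x _

lemma pSet_singleton (p : Ω → Ω → ℝ) (x y : Ω) : pSet p x {y} = p x y :=
  tsum_singleton y (p x)

lemma apply_self_eq_one (hsymm : Symm p) (hbdd : Bounded p) (hproj : OProj p) (x : Ω) :
    p x x = 1 := by
  have hortho := isOrtho_singleton p x
  have hle : p x x ≤ 1 := pSet_singleton p x x ▸ (hbdd x {x} hortho).2
  refine hle.eq_or_lt.resolve_right fun hlt => ?_
  obtain ⟨y, hy0, hy1⟩ := hproj x {x} hortho (by rwa [pSet_singleton])
  rw [pSet_singleton] at hy0 hy1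
  linarith [hsymm x y]

lemma pSet_eq_zero_iff (hnn : Nonneg p) (hs : Summable fun a : A => p x a) :
    pSet p x A = 0 ↔ ∀ a ∈ A, p x a = 0 := by
  rw [pSet, hs.hasSum_iff.symm.trans (hasSum_zero_iff_of_nonneg fun a => hnn x a), funext_iff]
  simp

lemma pSet_insert (hbdd : Bounded p) (hA : IsOrtho p A) (hxA : x ∉ A) (y : Ω) :
    pSet p y (insert x A) = p y x + pSet p y A := by
  rw [Set.insert_eq, pSet, Summable.tsum_union_disjoint (Set.disjoint_singleton_left.2 hxA)
    ((Set.finite_singleton x).summable (p y)) (hbdd y A hA).1]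
  exact congrArg (· + pSet p y A) (pSet_singleton p y x)

lemma IsOrtho.insert (hsymm : Symm p) (hA : IsOrtho p A) (hx : ∀ a ∈ A, p x a = 0) :
    IsOrtho p (insert x A) :=
  Set.Pairwise.insert hA fun a ha _ => ⟨hx a ha, hsymm a x ▸ hx a ha⟩

lemma mem_subgen_self (hsymm : Symm p) (hbdd : Bounded p) (hproj : OProj p)
    (hA : IsOrtho p A) (ha : x ∈ A) : x ∈ Subgen p A := by
  change pSet p x A = 1
  rw [pSet, tsum_eq_single (⟨x, ha⟩ : A) fun b hb =>
    hA x ha b b.2 fun h => hb (Subtype.ext h).symm]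
  exact apply_self_eq_one hsymm hbdd hproj x

lemma exists_maximal_isOrtho_superset (hA : IsOrtho p A) :
    ∃ C, A ⊆ C ∧ Maximal (IsOrtho p) C :=
  zorn_subset_nonempty {B | IsOrtho p B}
    (fun c hc hchain _ =>
      ⟨⋃₀ c, hchain.pairwise_sUnion.2 hc, fun _ => Set.subset_sUnion_of_mem⟩) A hA

lemma pSet_eq_one_of_maximal (hsymm : Symm p) (hnn : Nonneg p) (hbdd : Bounded p)
    (hproj : OProj p) (hC : Maximal (IsOrtho p) C) (x : Ω) : pSet p x C = 1 := by
  refine (hbdd x C hC.1).2.eq_or_lt.resolve_right fun hlt => ?_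
  obtain ⟨y, hy0, -⟩ := hproj x C hC.1 hlt
  have hyC : ∀ c ∈ C, p y c = 0 := (pSet_eq_zero_iff hnn (hbdd y C hC.1).1).1 hy0
  have hy : y ∈ C := hC.2 (hC.1.insert hsymm hyC) (Set.subset_insert y C) (Set.mem_insert y C)
  linarith [hyC y hy, apply_self_eq_one hsymm hbdd hproj y]

lemma perp_subgen (hsymm : Symm p) (hnn : Nonneg p) (hbdd : Bounded p) (hproj : OProj p)
    (hA : IsOrtho p A) : Perp p (Subgen p A) = {x | pSet p x A = 0} := by
  ext x
  rw [Set.mem_ofPred_eq, pSet_eq_zero_iff hnn (hbdd x A hA).1]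
  refine ⟨fun hx a ha => hx a (mem_subgen_self hsymm hbdd hproj hA ha), fun hx y hy => ?_⟩
  have hxA : x ∉ A := fun h => by linarith [hx x h, apply_self_eq_one hsymm hbdd hproj x]
  have hle := (hbdd y _ (hA.insert hsymm hx)).2
  rw [pSet_insert hbdd hA hxA, show pSet p y A = 1 from hy] at hle
  rw [hsymm]
  exact le_antisymm (by linarith) (hnn y x)

lemma perp_subgen_eq_subgen_sdiff (hsymm : Symm p) (hnn : Nonneg p) (hbdd : Bounded p)
    (hproj : OProj p) (hC : Maximal (IsOrtho p) C) (hAC : A ⊆ C) :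
    Perp p (Subgen p A) = Subgen p (C \ A) := by
  have hA : IsOrtho p A := hC.1.mono hAC
  rw [perp_subgen hsymm hnn hbdd hproj hA]
  ext x
  have hsum : pSet p x A + pSet p x (C \ A) = 1 := by
    rw [pSet, pSet, ← Summable.tsum_union_disjoint Set.disjoint_sdiff_right (hbdd x A hA).1
      (hbdd x _ (hC.1.mono Set.sdiff_subset)).1, Set.union_sdiff_cancel hAC]
    exact pSet_eq_one_of_maximal hsymm hnn hbdd hproj hC x
  change pSet p x A = 0 ↔ pSet p x (C \ A) = 1
  constructor <;> intro h <;> linarith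

theorem stmt5 (p : Ω → Ω → ℝ) (h1 : Symm p) (h2 : Nonneg p) (h3 : Bounded p)
    (h4 : OProj p) (X : Set Ω) (hX : IsSubspace p X) :
    IsSubspace p (Perp p X) ∧ Perp p (Perp p X) = X := by
  obtain ⟨A, hA, rfl⟩ := hX
  obtain ⟨C, hAC, hC⟩ := exists_maximal_isOrtho_superset hA
  have hperp := perp_subgen_eq_subgen_sdiff h1 h2 h3 h4 hC hAC
  refine ⟨⟨C \ A, hC.1.mono Set.sdiff_subset, hperp⟩, ?_⟩
  rw [hperp, perp_subgen_eq_subgen_sdiff h1 h2 h3 h4 hC Set.sdiff_subset,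
    Set.sdiff_sdiff_cancel_left hAC]
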